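/- arXiv:1707.06664 — 2 statements merged into one kernel-verified Lean document; each statement's English description precedes it below -/
import Mathlib

section
/- Let Δ > 1 be real, let n, D, m, e₀, e₁ be naturals with D ≤ n, and let M ∈ F₂^{m×n}. Suppose there exists a noise-tolerant decoder g : F₂^m → ℝ such that for every x ∈ F₂^n with 1 ≤ ‖x‖₀ ≤ D and every y ∈ F₂^m for which (M⊙x, y) is (e₀,e₁)-close, one has ‖x‖₀/Δ ≤ g(y) ≤ Δ·‖x‖₀. Then for all subsets S₁, S₂ ⊆ [n] with 1 ≤ |S₂| ≤ |S₁| ≤ D and |S₁| > Δ²·|S₂|, the pair (M⊙v(S₁), M⊙v(S₂)) is (e₀+e₁, e₀+e₁)-far. -/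
/-- The sparsity (number of nonzero entries) of a vector over `F₂`. -/
def sparsity {n : ℕ} (x : Fin n → ZMod 2) : ℕ :=
  (Finset.univ.filter (fun i => x i ≠ 0)).card

/-- The group testing output: `(M ⊙ x) i = 1` iff some coordinate `j` tested by row `i`
(`M i j = 1`) is defective (`x j = 1`). -/
def orMul {m n : ℕ} (M : Matrix (Fin m) (Fin n) (ZMod 2)) (x : Fin n → ZMod 2) :
    Fin m → ZMod 2 :=
  fun i => if ∃ j, M i j = 1 ∧ x j = 1 then 1 else 0

/-- The indicator vector `v(S) ∈ F₂ⁿ` of a subset `S ⊆ [n]`. -/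
def indic {n : ℕ} (S : Finset (Fin n)) : Fin n → ZMod 2 :=
  fun j => if j ∈ S then 1 else 0

/-- The support of a vector over `F₂`: the set of coordinates equal to `1`. -/
def supp {m : ℕ} (u : Fin m → ZMod 2) : Finset (Fin m) :=
  Finset.univ.filter (fun i => u i = 1)

/-- `(u, w)` is `(e₀,e₁)`-close iff `|supp(w) ∖ supp(u)| ≤ e₀` and
`|supp(u) ∖ supp(w)| ≤ e₁`. -/
def close {m : ℕ} (e₀ e₁ : ℕ) (u w : Fin m → ZMod 2) : Prop :=
  (supp w \ supp u).card ≤ e₀ ∧ (supp u \ supp w).card ≤ e₁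

lemma sparsity_indic {n : ℕ} (S : Finset (Fin n)) : sparsity (indic S) = S.card := by
  unfold sparsity indic
  congr 1
  ext j
  by_cases h : j ∈ S <;> simp [h]

lemma supp_indicator {m : ℕ} (C : Finset (Fin m)) :
    supp (fun i => if i ∈ C then (1 : ZMod 2) else 0) = C := by
  unfold supp
  ext i
  by_cases h : i ∈ C <;> simp [h]

/-- Necessity in the noisy setting: if `M` admits a decoder that `Δ`-approximates the
sparsity of every `x` with `1 ≤ ‖x‖₀ ≤ D` from any output `(e₀,e₁)`-close to `M ⊙ x`,
then the outputs of any two defective sets of size at most `D` whose sizes differ by more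
than a `Δ²` factor must be `(e₀+e₁, e₀+e₁)`-far. -/
theorem noisy_necessary {m n : ℕ} (Δ : ℝ) (hΔ : 1 < Δ) (D e₀ e₁ : ℕ) (hD : D ≤ n)
    (M : Matrix (Fin m) (Fin n) (ZMod 2))
    (hdec : ∃ g : (Fin m → ZMod 2) → ℝ,
      ∀ x : Fin n → ZMod 2, 1 ≤ sparsity x → sparsity x ≤ D →
        ∀ y : Fin m → ZMod 2, close e₀ e₁ (orMul M x) y →
          (sparsity x : ℝ) / Δ ≤ g y ∧ g y ≤ Δ * (sparsity x : ℝ)) :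
    ∀ S₁ S₂ : Finset (Fin n), 1 ≤ S₂.card → S₂.card ≤ S₁.card → S₁.card ≤ D →
      (S₁.card : ℝ) > Δ ^ 2 * (S₂.card : ℝ) →
      ¬ close (e₀ + e₁) (e₀ + e₁) (orMul M (indic S₁)) (orMul M (indic S₂)) := by
  obtain ⟨g, hg⟩ := hdec
  intro S₁ S₂ h2pos h21 h1D hgt hcl
  set A := supp (orMul M (indic S₁)) with hA
  set B := supp (orMul M (indic S₂)) with hB
  obtain ⟨hBA, hAB⟩ := hcl
  rw [← hA, ← hB] at hBA hAB
  -- split B \ A into P₀ (≤ e₀) and the rest (≤ e₁)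
  obtain ⟨P₀, hP₀sub, hP₀card⟩ :=
    Finset.exists_subset_card_eq (s := B \ A) (n := min e₀ (B \ A).card) (min_le_right _ _)
  obtain ⟨Q₀, hQ₀sub, hQ₀card⟩ :=
    Finset.exists_subset_card_eq (s := A \ B) (n := min e₀ (A \ B).card) (min_le_right _ _)
  set C := (A ∩ B) ∪ P₀ ∪ Q₀ with hC
  set y : Fin m → ZMod 2 := fun i => if i ∈ C then 1 else 0 with hy
  have hsy : supp y = C := supp_indicator C
  have hCA : C \ A ⊆ P₀ := by
    intro x hx
    simp only [hC, Finset.mem_sdiff, Finset.mem_union, Finset.mem_inter] at hx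
    rcases hx with ⟨h1, h2⟩
    rcases h1 with (⟨ha, _⟩ | hp) | hq
    · exact absurd ha h2
    · exact hp
    · exact absurd (Finset.mem_sdiff.mp (hQ₀sub hq)).1 h2
  have hAC : A \ C ⊆ (A \ B) \ Q₀ := by
    intro x hx
    rw [Finset.mem_sdiff, hC] at hx
    simp only [Finset.mem_union, Finset.mem_inter, not_or] at hx
    rw [Finset.mem_sdiff, Finset.mem_sdiff]
    exact ⟨⟨hx.1, fun hb => (hx.2.1.1 ⟨hx.1, hb⟩)⟩, hx.2.2⟩
  have hCB : C \ B ⊆ Q₀ := by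
    intro x hx
    simp only [hC, Finset.mem_sdiff, Finset.mem_union, Finset.mem_inter] at hx
    rcases hx with ⟨h1, h2⟩
    rcases h1 with (⟨_, hb⟩ | hp) | hq
    · exact absurd hb h2
    · exact absurd (Finset.mem_sdiff.mp (hP₀sub hp)).1 h2
    · exact hq
  have hBC : B \ C ⊆ (B \ A) \ P₀ := by
    intro x hx
    rw [Finset.mem_sdiff, hC] at hx
    simp only [Finset.mem_union, Finset.mem_inter, not_or] at hx
    rw [Finset.mem_sdiff, Finset.mem_sdiff]
    exact ⟨⟨hx.1, fun ha => (hx.2.1.1 ⟨ha, hx.1⟩)⟩, hx.2.1.2⟩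
  have hP₀rest : ((B \ A) \ P₀).card ≤ e₁ := by
    rw [Finset.card_sdiff_of_subset hP₀sub, hP₀card]
    omega
  have hQ₀rest : ((A \ B) \ Q₀).card ≤ e₁ := by
    rw [Finset.card_sdiff_of_subset hQ₀sub, hQ₀card]
    omega
  have hclose1 : close e₀ e₁ (orMul M (indic S₁)) y := by
    constructor
    · rw [hsy]
      exact le_trans (Finset.card_le_card hCA) (by rw [hP₀card]; exact min_le_left _ _)
    · rw [hsy]
      exact le_trans (Finset.card_le_card hAC) hQ₀rest
  have hclose2 : close e₀ e₁ (orMul M (indic S₂)) y := by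
    constructor
    · rw [hsy]
      exact le_trans (Finset.card_le_card hCB) (by rw [hQ₀card]; exact min_le_left _ _)
    · rw [hsy]
      exact le_trans (Finset.card_le_card hBC) hP₀rest
  have hs1 : sparsity (indic S₁) = S₁.card := sparsity_indic S₁
  have hs2 : sparsity (indic S₂) = S₂.card := sparsity_indic S₂
  have h1 := hg (indic S₁) (by rw [hs1]; omega) (by rw [hs1]; exact h1D) y hclose1
  have h2 := hg (indic S₂) (by rw [hs2]; omega) (by rw [hs2]; omega) y hclose2
  rw [hs1] at h1
  rw [hs2] at h2
  have hΔ0 : (0 : ℝ) < Δ := by linarith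
  have := h1.1.trans h2.2
  rw [div_le_iff₀ hΔ0] at this
  nlinarith [this, hgt]
end

section
/- Let Δ > 1 be real, let n, D, m, e₀, e₁ be naturals with D ≤ n, and let M ∈ F₂^{m×n}. Suppose that for all subsets S₁, S₂ ⊆ [n] with 1 ≤ |S₂| ≤ |S₁| ≤ D and |S₁| > Δ²·|S₂|, the pair (M⊙v(S₁), M⊙v(S₂)) is (e₀+e₁, e₀+e₁)-far. Then there exists a decoder g : F₂^m → ℝ such that for every x ∈ F₂^n with 1 ≤ ‖x‖₀ ≤ D and every y ∈ F₂^m for which (M⊙x, y) is (e₀,e₁)-close, one has ‖x‖₀/Δ ≤ g(y) ≤ Δ·‖x‖₀. -/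
lemma zmod2_cases : ∀ a : ZMod 2, a = 0 ∨ a = 1 := by decide

lemma indic_suppv {n : ℕ} (x : Fin n → ZMod 2) :
    indic (Finset.univ.filter (fun j => x j = 1)) = x := by
  funext j
  simp only [indic, Finset.mem_filter, Finset.mem_univ, true_and]
  rcases zmod2_cases (x j) with h | h <;> simp [h]

lemma card_suppv {n : ℕ} (x : Fin n → ZMod 2) :
    (Finset.univ.filter (fun j => x j = 1)).card = sparsity x := by
  unfold sparsity
  congr 1
  apply Finset.filter_congr
  intro j _
  rcases zmod2_cases (x j) with h | h <;> simp [h]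

lemma close_trans {m : ℕ} {e₀ e₁ : ℕ} {u u' y : Fin m → ZMod 2}
    (h : close e₀ e₁ u y) (h' : close e₀ e₁ u' y) :
    close (e₀ + e₁) (e₀ + e₁) u u' := by
  obtain ⟨h1, h2⟩ := h
  obtain ⟨h1', h2'⟩ := h'
  constructor
  · calc (supp u' \ supp u).card
        ≤ ((supp u' \ supp y) ∪ (supp y \ supp u)).card := by
          apply Finset.card_le_card
          intro i hi
          simp only [Finset.mem_sdiff, Finset.mem_union] at *
          by_cases hy : i ∈ supp y
          · exact Or.inr ⟨hy, hi.2⟩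
          · exact Or.inl ⟨hi.1, hy⟩
      _ ≤ (supp u' \ supp y).card + (supp y \ supp u).card := Finset.card_union_le _ _
      _ ≤ e₀ + e₁ := by omega
  · calc (supp u \ supp u').card
        ≤ ((supp u \ supp y) ∪ (supp y \ supp u')).card := by
          apply Finset.card_le_card
          intro i hi
          simp only [Finset.mem_sdiff, Finset.mem_union] at *
          by_cases hy : i ∈ supp y
          · exact Or.inr ⟨hy, hi.2⟩
          · exact Or.inl ⟨hi.1, hy⟩
      _ ≤ (supp u \ supp y).card + (supp y \ supp u').card := Finset.card_union_le _ _
      _ ≤ e₀ + e₁ := by omega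

/-- Sufficiency in the noisy setting: if the outputs of any two defective sets of size at
most `D` whose sizes differ by more than a `Δ²` factor are `(e₀+e₁, e₀+e₁)`-far, then
there is a decoder that `Δ`-approximates the sparsity of every `x` with `1 ≤ ‖x‖₀ ≤ D`
from any output `(e₀,e₁)`-close to `M ⊙ x`. -/
theorem noisy_sufficient {m n : ℕ} (Δ : ℝ) (hΔ : 1 < Δ) (D e₀ e₁ : ℕ) (hD : D ≤ n)
    (M : Matrix (Fin m) (Fin n) (ZMod 2))
    (hfar : ∀ S₁ S₂ : Finset (Fin n), 1 ≤ S₂.card → S₂.card ≤ S₁.card → S₁.card ≤ D →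
      (S₁.card : ℝ) > Δ ^ 2 * (S₂.card : ℝ) →
      ¬ close (e₀ + e₁) (e₀ + e₁) (orMul M (indic S₁)) (orMul M (indic S₂))) :
    ∃ g : (Fin m → ZMod 2) → ℝ,
      ∀ x : Fin n → ZMod 2, 1 ≤ sparsity x → sparsity x ≤ D →
        ∀ y : Fin m → ZMod 2, close e₀ e₁ (orMul M x) y →
          (sparsity x : ℝ) / Δ ≤ g y ∧ g y ≤ Δ * (sparsity x : ℝ) := by
  classical
  set A : (Fin m → ZMod 2) → Set ℕ := fun y =>
    {k | ∃ x' : Fin n → ZMod 2, sparsity x' = k ∧ 1 ≤ k ∧ k ≤ D ∧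
      close e₀ e₁ (orMul M x') y} with hA
  refine ⟨fun y => Δ * ((sInf (A y) : ℕ) : ℝ), ?_⟩
  intro x h1 hDx y hcl
  have hmemx : sparsity x ∈ A y := ⟨x, rfl, h1, hDx, hcl⟩
  have hne : (A y).Nonempty := ⟨_, hmemx⟩
  have hinf_le : sInf (A y) ≤ sparsity x := Nat.sInf_le hmemx
  obtain ⟨x', hx'spar, hk1, hkD, hx'cl⟩ := Nat.sInf_mem hne
  have hΔ0 : (0:ℝ) < Δ := lt_trans one_pos hΔ
  have hclose2 : close (e₀+e₁) (e₀+e₁) (orMul M x) (orMul M x') := close_trans hcl hx'cl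
  set k := sInf (A y) with hk
  have hle : (sparsity x : ℝ) ≤ Δ^2 * (k:ℝ) := by
    by_contra hgt
    push_neg at hgt
    have := hfar (Finset.univ.filter (fun j => x j = 1))
      (Finset.univ.filter (fun j => x' j = 1)) ?_ ?_ ?_ ?_
    · rw [indic_suppv, indic_suppv] at this
      exact this hclose2
    · rw [card_suppv, hx'spar]; exact hk1
    · rw [card_suppv, card_suppv, hx'spar]; exact hinf_le
    · rw [card_suppv]; exact hDx
    · rw [card_suppv, card_suppv, hx'spar]; exact hgt
  have hkx : (k:ℝ) ≤ (sparsity x : ℝ) := by exact_mod_cast hinf_le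
  constructor
  · show (sparsity x : ℝ) / Δ ≤ Δ * (k:ℝ)
    rw [div_le_iff₀ hΔ0]
    nlinarith
  · show Δ * (k:ℝ) ≤ Δ * (sparsity x : ℝ)
    nlinarith
end
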